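/- Under the hypotheses of the soundness setting (T concrete monotone on complete lattice I, T# abstract, γ monotone with T∘γ ≤ γ∘T# pointwise), if a program is partially correct w.r.t. S (i.e., lfp(T) ≤ γ(S)) and there exists an abstract uncovered element φ, i.e., γ(φ) ≤ γ(S) and γ(φ) ⊓ γ(T#(S)) = ⊥, with γ(φ) ≠ ⊥, then the program is not complete, i.e., γ(S) ≰ lfp(T). -/
import Mathlib

/-- partial correctness together with an abstract uncovered
element implies the program is not complete (`γ S ≰ lfp T`). -/
theorem stmt_2 {I F : Type*} [CompleteLattice I] [Lattice F]
    (T : I →o I) (γ : F → I) (hγ : Monotone γ)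
    (Tsharp : F → F) (S φ : F)
    (hsound : ∀ X : F, T (γ X) ≤ γ (Tsharp X))
    (hpc : OrderHom.lfp T ≤ γ S)
    (huncov₁ : γ φ ≤ γ S)
    (huncov₂ : γ φ ⊓ γ (Tsharp S) = ⊥)
    (hne : γ φ ≠ ⊥) :
    ¬ γ S ≤ OrderHom.lfp T := by
  intro h
  have h1 : γ S ≤ γ (Tsharp S) := by
    calc γ S ≤ OrderHom.lfp T := h
    _ = T (OrderHom.lfp T) := (OrderHom.map_lfp T).symm
    _ ≤ T (γ S) := T.monotone hpc
    _ ≤ γ (Tsharp S) := hsound S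
  exact hne (le_antisymm (huncov₂ ▸ le_inf le_rfl (huncov₁.trans h1)) bot_le)
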